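/- arXiv:1011.0950 — 5 statements merged into one kernel-verified Lean document; each statement's English description precedes it below -/
import Mathlib

section
/- The sequential matching procedure checkSeq returns true on a list of client classes [c₁, ..., c_k] if and only if the list matches in the server ontology, i.e., if and only if there exist server classes s₁, ..., s_k with m cᵢ = some sᵢ for all i and sub sᵢ s_{i+1} for all i < k. (Correctness of the specialization-sequence matching step of the Check-Consistency algorithm: a Type-1 mismatch is reported exactly when no matching chain of equivalent server classes exists.) -/
/-- A specialization sequence `cs = [c₁, ..., c_k]` of client classes *matches* in the
server ontology if there exist server classes `s₁, ..., s_k` with `m cᵢ = some sᵢ` for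
all `i` and `sub sᵢ s_{i+1}` for all `i < k`. -/
def Matches {C S : Type*} (sub : S → S → Prop) (m : C → Option S) (cs : List C) : Prop :=
  ∃ ss : List S, List.Forall₂ (fun c s => m c = some s) cs ss ∧ ss.Chain' sub

/-- Auxiliary procedure of the sequential matcher: `goSeq sub m s cs` checks the tail
`cs` of a specialization sequence, where `s` is the server class matched so far. -/
def goSeq {C S : Type*} (sub : S → S → Prop) [DecidableRel sub] (m : C → Option S) :
    S → List C → Bool
  | _, [] => true
  | s, c' :: cs' =>
    match m c' with
    | none => false
    | some s' => decide (sub s s') && goSeq sub m s' cs'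

/-- The sequential matching procedure of the Check-Consistency algorithm. -/
def checkSeq {C S : Type*} (sub : S → S → Prop) [DecidableRel sub] (m : C → Option S) :
    List C → Bool
  | [] => true
  | c :: cs =>
    match m c with
    | none => false
    | some s => goSeq sub m s cs

open List

section

variable {C S : Type*} (sub : S → S → Prop) (m : C → Option S)

theorem matches_iff (cs : List C) :
    Matches sub m cs ↔ ∃ ss, Forall₂ (fun c s => m c = some s) cs ss ∧ ss.IsChain sub :=
  Iff.rfl

theorem goSeq_eq_true_iff [DecidableRel sub] (s : S) (cs : List C) :
    goSeq sub m s cs = true ↔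
      ∃ ss, Forall₂ (fun c s => m c = some s) cs ss ∧ (s :: ss).IsChain sub := by
  induction cs generalizing s with
  | nil => simp [goSeq]
  | cons c cs ih =>
    cases h : m c with
    | none => simp [goSeq, h, forall₂_cons_left_iff]
    | some s' => simp [goSeq, h, ih, forall₂_cons_left_iff, ← exists_and_left, and_left_comm]

end

/-- Correctness of the specialization-sequence matching step of Check-Consistency:
`checkSeq` returns `true` on a list of client classes iff the list matches in the
server ontology. -/
theorem checkSeq_eq_true_iff_matches {C S : Type*} (sub : S → S → Prop)
    [DecidableRel sub] (m : C → Option S) (cs : List C) :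
    checkSeq sub m cs = true ↔ Matches sub m cs := by
  rw [matches_iff]
  cases cs with
  | nil => simp [checkSeq]
  | cons c cs =>
    cases h : m c with
    | none => simp [checkSeq, h, forall₂_cons_left_iff]
    | some s => simp [checkSeq, h, goSeq_eq_true_iff, forall₂_cons_left_iff]
end

section
/- [Projection pushing through natural join] Let R₁ be a relation over X₁ and R₂ a relation over X₂, and let Y ⊆ X₁ ∪ X₂. Then π_Y(R₁ ⋈ R₂) = π_Y( π_{X₁ ∩ (Y ∪ X₂)}(R₁) ⋈ R₂ ). (This identity justifies the staged computation of assignable sets in the verification algorithm, where each recursive VerifyConflict call stores only the projection of its join onto its own variable set before joining with later relations.) -/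
/-!
If `X₁ ∩ X₂ ⊆ W ⊆ X₁`, projecting `R₁ ⋈ R₂` onto `W ∪ X₂` gives exactly `π_W(R₁) ⋈ R₂`:
if `r ∈ R₁` agrees on `W` with `s ∈ π_W(R₁) ⋈ R₂`, then `r` and the `X₂`-part of `s` glue to a
tuple of `R₁ ⋈ R₂`, because `X₁` and `X₂` overlap only inside `W`. For `W = X₁ ∩ (Y ∪ X₂)` we
have `Y ⊆ W ∪ X₂`, and projecting both sides further onto `Y` gives the theorem.
-/

/-- A tuple over a finite variable set `X` assigns a value to each variable in `X`. -/
def Tuple (V : Type*) {ι : Type*} (X : Finset ι) : Type _ := ↥X → V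

/-- Restriction of a tuple over `X` to a subset `Y ⊆ X`. -/
def Tuple.restrict {ι V : Type*} {X Y : Finset ι} (h : Y ⊆ X) (t : Tuple V X) :
    Tuple V Y :=
  fun y => t ⟨y.1, h y.2⟩

/-- Restriction of a valuation `f : ι → V` to a tuple over `X`. -/
def restrictVal {ι V : Type*} (X : Finset ι) (f : ι → V) : Tuple V X :=
  fun x => f x.1

/-- The cylinder of a relation `R` over `X`: the set of valuations whose restriction to
`X` lies in `R`. -/
def Cyl {ι V : Type*} {X : Finset ι} (R : Set (Tuple V X)) : Set (ι → V) :=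
  {f | restrictVal X f ∈ R}

/-- The natural join of a relation over `X₁` with a relation over `X₂`: the relation
over `X₁ ∪ X₂` consisting of the tuples whose restriction to `X₁` lies in `R₁` and
whose restriction to `X₂` lies in `R₂`. -/
def natJoin {ι V : Type*} [DecidableEq ι] {X₁ X₂ : Finset ι} (R₁ : Set (Tuple V X₁))
    (R₂ : Set (Tuple V X₂)) : Set (Tuple V (X₁ ∪ X₂)) :=
  {t | t.restrict Finset.subset_union_left ∈ R₁ ∧
       t.restrict Finset.subset_union_right ∈ R₂}

/-- The projection of a relation `R` over `X` to a subset `Y ⊆ X`: the set of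
restrictions to `Y` of the tuples of `R`. -/
def proj {ι V : Type*} {X : Finset ι} (Y : Finset ι) (h : Y ⊆ X)
    (R : Set (Tuple V X)) : Set (Tuple V Y) :=
  {u | ∃ t ∈ R, t.restrict h = u}

/-- The selection of a relation `R` over `X` by a predicate `P` on tuples over `X`. -/
def sel {ι V : Type*} {X : Finset ι} (P : Tuple V X → Prop) (R : Set (Tuple V X)) :
    Set (Tuple V X) :=
  {t ∈ R | P t}

/-- A relation together with its variable set. -/
structure DBRel (ι V : Type*) where
  X : Finset ι
  R : Set (Tuple V X)

/-- Binary natural join of bundled relations. -/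
def DBRel.join {ι V : Type*} [DecidableEq ι] (A B : DBRel ι V) : DBRel ι V :=
  ⟨A.X ∪ B.X, natJoin A.R B.R⟩

/-- The iterated (left-nested) binary natural join `((R₁ ⋈ R₂) ⋈ ⋯) ⋈ R_k` of the
relations `R₁ :: [R₂, ..., R_k]`. -/
def multiJoin {ι V : Type*} [DecidableEq ι] (A : DBRel ι V) (l : List (DBRel ι V)) :
    DBRel ι V :=
  l.foldl DBRel.join A

namespace Tuple

variable {ι V : Type*} [DecidableEq ι] {A B : Finset ι}

def glue (r : Tuple V A) (s : Tuple V B) : Tuple V (A ∪ B) := fun x =>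
  if h : x.1 ∈ B then s ⟨x.1, h⟩ else r ⟨x.1, (Finset.mem_union.mp x.2).resolve_right h⟩

lemma glue_of_mem_right (r : Tuple V A) (s : Tuple V B) {x : ↥(A ∪ B)} (hx : x.1 ∈ B) :
    glue r s x = s ⟨x.1, hx⟩ :=
  dif_pos hx

lemma glue_of_notMem_right (r : Tuple V A) (s : Tuple V B) {x : ↥(A ∪ B)} (hx : x.1 ∉ B) :
    glue r s x = r ⟨x.1, (Finset.mem_union.mp x.2).resolve_right hx⟩ :=
  dif_neg hx

lemma restrict_glue_right (r : Tuple V A) (s : Tuple V B) :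
    (glue r s).restrict Finset.subset_union_right = s :=
  funext fun x => glue_of_mem_right r s x.2

lemma restrict_glue_left {r : Tuple V A} {s : Tuple V B}
    (hrs : r.restrict Finset.inter_subset_left = s.restrict Finset.inter_subset_right) :
    (glue r s).restrict Finset.subset_union_left = r := by
  funext x
  by_cases hx : x.1 ∈ B
  · exact (glue_of_mem_right r s hx).trans (congrFun hrs ⟨x.1, Finset.mem_inter.2 ⟨x.2, hx⟩⟩).symm
  · exact glue_of_notMem_right r s hx

end Tuple

lemma proj_proj {ι V : Type*} {X Y Z : Finset ι} (hYX : Y ⊆ X) (hZY : Z ⊆ Y)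
    (R : Set (Tuple V X)) :
    proj Z hZY (proj Y hYX R) = proj Z (hZY.trans hYX) R := by
  ext u
  constructor
  · rintro ⟨_, ⟨t, ht, rfl⟩, rfl⟩
    exact ⟨t, ht, rfl⟩
  · rintro ⟨t, ht, rfl⟩
    exact ⟨_, ⟨t, ht, rfl⟩, rfl⟩

open Tuple in
lemma proj_natJoin_eq_natJoin_proj {ι V : Type*} [DecidableEq ι] {X₁ X₂ W : Finset ι}
    (R₁ : Set (Tuple V X₁)) (R₂ : Set (Tuple V X₂)) (hW : W ⊆ X₁) (hW₁₂ : X₁ ∩ X₂ ⊆ W) :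
    proj (W ∪ X₂) (Finset.union_subset_union hW subset_rfl) (natJoin R₁ R₂) =
      natJoin (proj W hW R₁) R₂ := by
  ext s
  constructor
  · rintro ⟨t, ⟨ht₁, ht₂⟩, rfl⟩
    exact ⟨⟨_, ht₁, rfl⟩, ht₂⟩
  · rintro ⟨⟨r, hr, hrs⟩, hs⟩
    set s₂ := s.restrict (Finset.subset_union_right (s₁ := W))
    have hagree : r.restrict Finset.inter_subset_left = s₂.restrict Finset.inter_subset_right :=
      congrArg (restrict hW₁₂) hrs
    refine ⟨glue r s₂, ⟨by rwa [restrict_glue_left hagree], by rwa [restrict_glue_right]⟩, ?_⟩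
    funext x
    by_cases hx : x.1 ∈ X₂
    · exact glue_of_mem_right r s₂ hx
    · have hxW : x.1 ∈ W := (Finset.mem_union.mp x.2).resolve_right hx
      exact (glue_of_notMem_right r s₂ hx).trans (congrFun hrs ⟨x.1, hxW⟩)

/-- Projection pushing through natural join: for `Y ⊆ X₁ ∪ X₂`,
`π_Y(R₁ ⋈ R₂) = π_Y( π_{X₁ ∩ (Y ∪ X₂)}(R₁) ⋈ R₂ )`. This identity justifies the staged
computation of assignable sets in the verification algorithm, where each recursive
`VerifyConflict` call stores only the projection of its join onto its own variable set
before joining with later relations. -/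
theorem proj_push_natJoin {ι V : Type*} [DecidableEq ι] {X₁ X₂ Y : Finset ι}
    (R₁ : Set (Tuple V X₁)) (R₂ : Set (Tuple V X₂)) (hY : Y ⊆ X₁ ∪ X₂) :
    proj Y hY (natJoin R₁ R₂) =
      proj Y
        (by
          intro x hx
          rcases Finset.mem_union.mp (hY hx) with h | h
          · exact Finset.mem_union_left _
              (Finset.mem_inter.mpr ⟨h, Finset.mem_union_left _ hx⟩)
          · exact Finset.mem_union_right _ h)
        (natJoin (proj (X₁ ∩ (Y ∪ X₂)) Finset.inter_subset_left R₁) R₂) := by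
  have hW₁₂ : X₁ ∩ X₂ ⊆ X₁ ∩ (Y ∪ X₂) := Finset.inter_subset_inter_left Finset.subset_union_right
  rw [← proj_natJoin_eq_natJoin_proj R₁ R₂ Finset.inter_subset_left hW₁₂, proj_proj]
end

section
/- [Correctness of GenerateAssignableSet] Assume V is nonempty. Let R₁, ..., R_k be relations over finite variable sets X₁, ..., X_k and let v ⊆ X₁ ∪ ⋯ ∪ X_k. Then a tuple u over v belongs to the projection π_v(R₁ ⋈ ⋯ ⋈ R_k) if and only if there exists a valuation f : ι → V with f|v = u and f|Xⱼ ∈ Rⱼ for every j. In particular, π_v(R₁ ⋈ ⋯ ⋈ R_k) is nonempty if and only if there exists a valuation f with f|Xⱼ ∈ Rⱼ for every j; i.e., the AssignableSet of the variable set v computed by relational algebra is exactly the set of correct instantiations of v under the conjunctive evaluation semantics. -/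
lemma cyl_natJoin {ι V : Type*} [DecidableEq ι] {X₁ X₂ : Finset ι} (R₁ : Set (Tuple V X₁))
    (R₂ : Set (Tuple V X₂)) : Cyl (natJoin R₁ R₂) = Cyl R₁ ∩ Cyl R₂ :=
  rfl

lemma mem_cyl_multiJoin {ι V : Type*} [DecidableEq ι] (A : DBRel ι V) (l : List (DBRel ι V))
    (f : ι → V) : f ∈ Cyl (multiJoin A l).R ↔ ∀ B ∈ A :: l, f ∈ Cyl B.R := by
  induction l generalizing A with
  | nil => simp [multiJoin]
  | cons C l ih =>
    change f ∈ Cyl (multiJoin (A.join C) l).R ↔ _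
    rw [ih]
    simp only [List.forall_mem_cons, DBRel.join, cyl_natJoin, Set.mem_inter_iff, and_assoc]

lemma exists_restrictVal_eq {ι V : Type*} [Nonempty V] {X : Finset ι} (t : Tuple V X) :
    ∃ f : ι → V, restrictVal X f = t := by
  classical
  exact ⟨fun x => if h : x ∈ X then t ⟨x, h⟩ else Classical.arbitrary V,
    funext fun x => dif_pos x.2⟩

lemma mem_proj_iff {ι V : Type*} [Nonempty V] {X Y : Finset ι} (h : Y ⊆ X)
    (R : Set (Tuple V X)) (u : Tuple V Y) :
    u ∈ proj Y h R ↔ ∃ f ∈ Cyl R, restrictVal Y f = u := by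
  constructor
  · rintro ⟨t, ht, rfl⟩
    obtain ⟨f, rfl⟩ := exists_restrictVal_eq t
    exact ⟨f, ht, rfl⟩
  · rintro ⟨f, hf, rfl⟩
    exact ⟨restrictVal X f, hf, rfl⟩

lemma proj_nonempty_iff {ι V : Type*} [Nonempty V] {X Y : Finset ι} (h : Y ⊆ X)
    (R : Set (Tuple V X)) : (proj Y h R).Nonempty ↔ (Cyl R).Nonempty := by
  simp only [Set.Nonempty, mem_proj_iff]
  exact ⟨fun ⟨_, f, hf, _⟩ => ⟨f, hf⟩, fun ⟨f, hf⟩ => ⟨restrictVal Y f, f, hf, rfl⟩⟩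

/-- Correctness of `GenerateAssignableSet`: for relations `R₁, ..., R_k` (bundled as
`A :: l`) and `v ⊆ X₁ ∪ ⋯ ∪ X_k`, a tuple `u` over `v` belongs to
`π_v(R₁ ⋈ ⋯ ⋈ R_k)` iff there is a valuation `f : ι → V` with `f|v = u` and
`f|Xⱼ ∈ Rⱼ` for every `j`; in particular `π_v(R₁ ⋈ ⋯ ⋈ R_k)` is nonempty iff some
valuation restricts into every `Rⱼ`, i.e. the AssignableSet computed by relational
algebra is exactly the set of correct instantiations of `v` under the conjunctive
evaluation semantics. -/
theorem generateAssignableSet_correct {ι V : Type*} [DecidableEq ι] [Nonempty V]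
    (A : DBRel ι V) (l : List (DBRel ι V)) (v : Finset ι)
    (hv : v ⊆ (multiJoin A l).X) :
    (∀ u : Tuple V v,
      u ∈ proj v hv (multiJoin A l).R ↔
        ∃ f : ι → V, restrictVal v f = u ∧ ∀ B ∈ A :: l, restrictVal B.X f ∈ B.R) ∧
    ((proj v hv (multiJoin A l).R).Nonempty ↔
      ∃ f : ι → V, ∀ B ∈ A :: l, restrictVal B.X f ∈ B.R) := by
  refine ⟨fun u => (mem_proj_iff hv _ u).trans ?_, (proj_nonempty_iff hv _).trans ?_⟩
  · exact exists_congr fun f => and_comm.trans (and_congr_right' (mem_cyl_multiJoin A l f))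
  · exact exists_congr (mem_cyl_multiJoin A l)
end

section
/- [Completeness of the database-level verification algorithm (Theorem 4)] Assume V is nonempty. Let R₁, ..., R_k be relations over finite variable sets X₁, ..., X_k (the relations of the concepts and previously instantiated tuple sets along the protocol path leading to the conflicting query), let v ⊆ X₁ ∪ ⋯ ∪ X_k (the set of previously instantiated variables of the conflicting query together with its RestrictSet), and let 𝒞 be a set of predicates on tuples over v (the relevant branch conditions). Define δ = σ_{t ↦ ∀ P ∈ 𝒞, P t}( π_v(R₁ ⋈ ⋯ ⋈ R_k) ). If there exists a valuation f : ι → V such that f|Xⱼ ∈ Rⱼ for every j and P (f|v) holds for every P ∈ 𝒞 (i.e., the conflicting query is reachable from the start state of the protocol by some correct instantiation), then δ ≠ ∅, so the algorithm reports the conflict as not spurious. -/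
/-! The restriction of the witnessing valuation to `v` lies in `δ`: restrictions of a single
valuation agree on shared variables, so they survive every join and every projection. -/

theorem restrictVal_mem_natJoin {ι V : Type*} [DecidableEq ι] {X₁ X₂ : Finset ι}
    {R₁ : Set (Tuple V X₁)} {R₂ : Set (Tuple V X₂)} {f : ι → V}
    (h₁ : restrictVal X₁ f ∈ R₁) (h₂ : restrictVal X₂ f ∈ R₂) :
    restrictVal (X₁ ∪ X₂) f ∈ natJoin R₁ R₂ :=
  ⟨h₁, h₂⟩

theorem restrictVal_mem_multiJoin {ι V : Type*} [DecidableEq ι] (A : DBRel ι V)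
    (l : List (DBRel ι V)) {f : ι → V} (hf : ∀ B ∈ A :: l, restrictVal B.X f ∈ B.R) :
    restrictVal (multiJoin A l).X f ∈ (multiJoin A l).R := by
  induction l generalizing A with
  | nil => exact hf A List.mem_cons_self
  | cons B l ih =>
    refine ih (A.join B) fun C hC => ?_
    rcases List.mem_cons.1 hC with rfl | hC
    · exact restrictVal_mem_natJoin (hf A List.mem_cons_self) (hf B (by simp))
    · exact hf C (by simp [hC])

theorem restrictVal_mem_proj {ι V : Type*} {X Y : Finset ι} (h : Y ⊆ X)
    {R : Set (Tuple V X)} {f : ι → V} (hf : restrictVal X f ∈ R) :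
    restrictVal Y f ∈ proj Y h R :=
  ⟨restrictVal X f, hf, rfl⟩

theorem verifyConflict_complete_general {ι V : Type*} [DecidableEq ι]
    (A : DBRel ι V) (l : List (DBRel ι V)) (v : Finset ι)
    (hv : v ⊆ (multiJoin A l).X) (𝒞 : Set (Tuple V v → Prop))
    (hreach : ∃ f : ι → V, (∀ B ∈ A :: l, restrictVal B.X f ∈ B.R) ∧
        ∀ P ∈ 𝒞, P (restrictVal v f)) :
    sel (fun t => ∀ P ∈ 𝒞, P t) (proj v hv (multiJoin A l).R) ≠ ∅ := by
  obtain ⟨f, hf, hP⟩ := hreach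
  exact Set.nonempty_iff_ne_empty.mp
    ⟨restrictVal v f, restrictVal_mem_proj hv (restrictVal_mem_multiJoin A l hf), hP⟩

/-- Completeness of the database-level verification algorithm (Theorem 4): with
`δ = σ_{∀ P ∈ 𝒞, P}( π_v(R₁ ⋈ ⋯ ⋈ R_k) )`, if some valuation `f : ι → V` satisfies
`f|Xⱼ ∈ Rⱼ` for every `j` together with every relevant branch condition `P ∈ 𝒞` at
`f|v` (i.e. the conflicting query is reachable from the start state of the protocol by
some correct instantiation), then `δ ≠ ∅`, so the algorithm reports the conflict as not
spurious. -/
theorem verifyConflict_complete {ι V : Type*} [DecidableEq ι] [Nonempty V]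
    (A : DBRel ι V) (l : List (DBRel ι V)) (v : Finset ι)
    (hv : v ⊆ (multiJoin A l).X) (𝒞 : Set (Tuple V v → Prop))
    (hreach : ∃ f : ι → V, (∀ B ∈ A :: l, restrictVal B.X f ∈ B.R) ∧
        ∀ P ∈ 𝒞, P (restrictVal v f)) :
    sel (fun t => ∀ P ∈ 𝒞, P t) (proj v hv (multiJoin A l).R) ≠ ∅ :=
  verifyConflict_complete_general A l v hv 𝒞 hreach
end

section
/- [Decision procedure for spuriousness] Assume V is nonempty. Let R₁, ..., R_k be relations over finite variable sets X₁, ..., X_k, let v ⊆ X₁ ∪ ⋯ ∪ X_k, and let 𝒞 be a set of predicates on tuples over v. Then σ_{t ↦ ∀ P ∈ 𝒞, P t}( π_v(R₁ ⋈ ⋯ ⋈ R_k) ) = ∅ if and only if there is no valuation f : ι → V with f|Xⱼ ∈ Rⱼ for every j and P (f|v) for every P ∈ 𝒞. (Combined soundness and completeness of the relational-algebra test for the spuriousness of an ontological conflict with respect to the current state of the back-end database.) -/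
/-!
Since `V` is nonempty, every tuple over a finite variable set extends to a valuation, so the
projection `π_v(R)` is the image of the cylinder of `R` under restriction to `v`. The cylinder of
an iterated join is the intersection of the cylinders of its factors, so a tuple survives the
selection exactly when it is the restriction of a valuation satisfying every relation and every
predicate.
-/

theorem cyl_join {ι V : Type*} [DecidableEq ι] (A B : DBRel ι V) :
    Cyl (A.join B).R = Cyl A.R ∩ Cyl B.R :=
  rfl

theorem cyl_multiJoin {ι V : Type*} [DecidableEq ι] (A : DBRel ι V) (l : List (DBRel ι V)) :
    Cyl (multiJoin A l).R = {f | ∀ B ∈ A :: l, f ∈ Cyl B.R} := by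
  induction l generalizing A with
  | nil => simp [multiJoin]
  | cons B l ih =>
    rw [multiJoin, List.foldl_cons, ← multiJoin, ih]
    ext f
    simp [cyl_join, and_assoc]

theorem restrictVal_surjective {ι V : Type*} [Nonempty V] (X : Finset ι) :
    Function.Surjective (restrictVal (V := V) X) := fun t =>
  ⟨Function.extend Subtype.val t fun _ => Classical.arbitrary V,
    funext fun x => Subtype.val_injective.extend_apply t _ x⟩

theorem proj_eq_image_cyl {ι V : Type*} [Nonempty V] {X Y : Finset ι} (h : Y ⊆ X)
    (R : Set (Tuple V X)) : proj Y h R = restrictVal Y '' Cyl R := by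
  ext u
  constructor
  · rintro ⟨t, ht, rfl⟩
    obtain ⟨f, rfl⟩ := restrictVal_surjective X t
    exact ⟨f, ht, rfl⟩
  · rintro ⟨f, hf, rfl⟩
    exact ⟨restrictVal X f, hf, rfl⟩

theorem sel_image_eq_empty_iff {α ι V : Type*} {X : Finset ι} (P : Tuple V X → Prop)
    (g : α → Tuple V X) (S : Set α) :
    sel P (g '' S) = ∅ ↔ ¬ ∃ a ∈ S, P (g a) := by
  simp [sel, Set.eq_empty_iff_forall_notMem]

/-- Decision procedure for spuriousness (combined soundness and completeness of the
relational-algebra test): `σ_{∀ P ∈ 𝒞, P}( π_v(R₁ ⋈ ⋯ ⋈ R_k) ) = ∅` iff there is no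
valuation `f : ι → V` with `f|Xⱼ ∈ Rⱼ` for every `j` and `P (f|v)` for every
`P ∈ 𝒞`. -/
theorem verifyConflict_iff {ι V : Type*} [DecidableEq ι] [Nonempty V]
    (A : DBRel ι V) (l : List (DBRel ι V)) (v : Finset ι)
    (hv : v ⊆ (multiJoin A l).X) (𝒞 : Set (Tuple V v → Prop)) :
    sel (fun t => ∀ P ∈ 𝒞, P t) (proj v hv (multiJoin A l).R) = ∅ ↔
      ¬ ∃ f : ι → V, (∀ B ∈ A :: l, restrictVal B.X f ∈ B.R) ∧
          ∀ P ∈ 𝒞, P (restrictVal v f) := by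
  rw [proj_eq_image_cyl, sel_image_eq_empty_iff, cyl_multiJoin]
  rfl
end
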